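/- arXiv:1412.7357 — 4 statements merged into one kernel-verified Lean document; each statement's English description precedes it below -/
import Mathlib

section
/- Let q ≥ 2, n ≥ 1, β ∈ F_q^n, I ⊆ {1,...,n}, and let Γ_I = {α ∈ F_q^n : α_i = 0 for all i ∉ I}. Then ∑_{α ∈ Γ_I} ξ^{⟨α,β⟩} x^{|I| - wt(α)} y^{wt(α)} = (x - y)^{|I ∩ s(β)|} (x + (q-1)y)^{|I| - |I ∩ s(β)|}, where wt(α) is the Hamming weight of α, s(β) is the support of β, and ξ = e^{2πi/q}. -/
open Finset Matrix

noncomputable def xiq (q : ℕ) : ℂ := Complex.exp (2 * Real.pi * Complex.I / q)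

/-- The character `φ^β(α) = ξ^{⟨α,β⟩}` on the q-ary Hamming space. -/
noncomputable def chr (q n : ℕ) [NeZero q] (β α : Fin n → ZMod q) : ℂ :=
  xiq q ^ (∑ i, α i * β i : ZMod q).val

/-- Fourier transform `f̂(α) = ∑_β f(β) conj(ξ^{⟨α,β⟩})`. -/
noncomputable def ftr (q n : ℕ) [NeZero q] (f : (Fin n → ZMod q) → ℂ)
    (α : Fin n → ZMod q) : ℂ :=
  ∑ β : Fin n → ZMod q, f β * (starRingEnd ℂ) (chr q n β α)

/-- The face `Γ_I(α)` of the hypercube. -/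
def face (q n : ℕ) [NeZero q] (I : Finset (Fin n)) (α : Fin n → ZMod q) :
    Finset (Fin n → ZMod q) :=
  Finset.univ.filter (fun β => ∀ i ∉ I, β i = α i)

/-- The support `s(β)` of a vertex. -/
def supp (q n : ℕ) [NeZero q] (β : Fin n → ZMod q) : Finset (Fin n) :=
  Finset.univ.filter (fun i => β i ≠ 0)

/-- Local weight enumerator `g^{I,α}_f(x,y)`. -/
noncomputable def lwe (q n : ℕ) [NeZero q] (f : (Fin n → ZMod q) → ℂ)
    (I : Finset (Fin n)) (α : Fin n → ZMod q) (x y : ℂ) : ℂ :=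
  ∑ β ∈ face q n I α, f β * y ^ hammingDist β α * x ^ (I.card - hammingDist β α)

/-- `f` is an eigenfunction of the Hamming graph `H(n,q)` with eigenvalue `μ`. -/
def IsEigenfun (q n : ℕ) [NeZero q] (f : (Fin n → ZMod q) → ℂ) (μ : ℂ) : Prop :=
  ∀ α, ∑ β ∈ Finset.univ.filter (fun β => hammingDist α β = 1), f β = μ * f α

/-- Adjacency matrix of the Hamming graph `H(n,q)`. -/
noncomputable def adjM (q n : ℕ) [NeZero q] :
    Matrix (Fin n → ZMod q) (Fin n → ZMod q) ℂ :=
  fun α β => if hammingDist α β = 1 then 1 else 0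

/-- Vertex-color incidence matrix of a coloring `c`. -/
noncomputable def colM (q n r : ℕ) [NeZero q] (c : (Fin n → ZMod q) → Fin r) :
    Matrix (Fin n → ZMod q) (Fin r) ℂ :=
  fun α i => if c α = i then 1 else 0



section aux
variable (q : ℕ) [NeZero q]

lemma xiq_prim : IsPrimitiveRoot (xiq q) q := by
  simpa [xiq] using Complex.isPrimitiveRoot_exp q (NeZero.ne q)

lemma xiq_pow : (xiq q) ^ q = 1 := (xiq_prim q).pow_eq_one

noncomputable def chi : AddChar (ZMod q) ℂ := AddChar.zmodChar q (xiq_pow q)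

lemma chi_apply (a : ZMod q) : chi q a = xiq q ^ a.val := rfl

lemma chi_map_sum {ι : Type*} (s : Finset ι) (f : ι → ZMod q) :
    chi q (∑ i ∈ s, f i) = ∏ i ∈ s, chi q (f i) := by
  classical
  induction s using Finset.cons_induction with
  | empty => simp
  | cons i s hi ih =>
      rw [Finset.sum_cons, Finset.prod_cons, AddChar.map_add_eq_mul, ih]

lemma chi_ne_one_of_ne_zero {c : ZMod q} (hc : c ≠ 0) : chi q c ≠ 1 := by
  rw [chi_apply]
  intro h
  have hdvd := ((xiq_prim q).pow_eq_one_iff_dvd c.val).mp h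
  have hlt : c.val < q := ZMod.val_lt c
  have hpos : 0 < c.val := Nat.pos_of_ne_zero (fun h0 => hc ((ZMod.val_eq_zero c).mp h0))
  exact absurd (Nat.le_of_dvd hpos hdvd) (by omega)

lemma chi_sum_zero {c : ZMod q} (hc : c ≠ 0) : ∑ a : ZMod q, chi q (a * c) = 0 := by
  have h : (chi q).mulShift c ≠ 1 := by
    intro h
    have := DFunLike.congr_fun h 1
    simp only [AddChar.mulShift_apply, mul_one, AddChar.one_apply] at this
    exact chi_ne_one_of_ne_zero q hc this
  simpa [AddChar.mulShift_apply, mul_comm] using AddChar.sum_eq_zero_of_ne_one h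

end aux

theorem stmt_1 (q n : ℕ) [NeZero q] (hq : 2 ≤ q) (hn : 1 ≤ n)
    (β : Fin n → ZMod q) (I : Finset (Fin n)) (x y : ℂ) :
    ∑ α ∈ Finset.univ.filter (fun α : Fin n → ZMod q => ∀ i ∉ I, α i = 0),
      xiq q ^ (∑ i, α i * β i : ZMod q).val *
        x ^ (I.card - hammingNorm α) * y ^ hammingNorm α
    = (x - y) ^ (I ∩ supp q n β).card *
        (x + ((q : ℂ) - 1) * y) ^ (I.card - (I ∩ supp q n β).card) := by
  classical
  set F : ZMod q → ℂ := fun c => if c = 0 then x + ((q:ℂ)-1)*y else x - y with hF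
  have hite : ∀ c : ZMod q, ∑ a : ZMod q, chi q (a*c) * (if a = 0 then x else y) = F c := by
    intro c
    by_cases hc : c = 0
    · subst hc
      have h1 : ∀ a : ZMod q, chi q (a*0) * (if a = 0 then x else y)
          = y + (if a = 0 then x - y else 0) := by
        intro a; by_cases h : a = 0 <;> simp [h]
      rw [Finset.sum_congr rfl (fun a _ => h1 a), Finset.sum_add_distrib,
        Finset.sum_const, Finset.sum_ite_eq' Finset.univ (0 : ZMod q) (fun _ => x - y)]
      simp only [hF, if_pos rfl, Finset.card_univ, ZMod.card, Finset.mem_univ, if_true,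
        nsmul_eq_mul]
      ring
    · have h1 : ∀ a : ZMod q, chi q (a*c) * (if a = 0 then x else y)
          = chi q (a*c) * y + (if a = 0 then x - y else 0) := by
        intro a; by_cases h : a = 0 <;> simp [h] <;> ring
      rw [Finset.sum_congr rfl (fun a _ => h1 a), Finset.sum_add_distrib, ← Finset.sum_mul,
        chi_sum_zero q hc, Finset.sum_ite_eq' Finset.univ (0 : ZMod q) (fun _ => x - y)]
      simp [hF, hc]
  set H : Fin n → ZMod q → ℂ := fun i a =>
    if i ∈ I then chi q (a * β i) * (if a = 0 then x else y)
    else (if a = 0 then 1 else 0) with hH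
  have step1 : ∀ α ∈ Finset.univ.filter (fun α : Fin n → ZMod q => ∀ i ∉ I, α i = 0),
      xiq q ^ (∑ i, α i * β i : ZMod q).val * x ^ (I.card - hammingNorm α) * y ^ hammingNorm α
        = ∏ i, H i (α i) := by
    intro α hα
    rw [Finset.mem_filter] at hα
    have hα := hα.2
    have hprod : ∏ i, H i (α i)
        = ∏ i ∈ I, (chi q (α i * β i) * (if α i = 0 then x else y)) := by
      calc ∏ i, H i (α i) = ∏ i ∈ I, H i (α i) :=
            (Finset.prod_subset (Finset.subset_univ I)
              (fun i _ hi => by simp [hH, hi, hα i hi])).symm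
        _ = ∏ i ∈ I, (chi q (α i * β i) * (if α i = 0 then x else y)) :=
            Finset.prod_congr rfl fun i hi => by simp [hH, hi]
    rw [hprod, Finset.prod_mul_distrib]
    have hchi : ∏ i ∈ I, chi q (α i * β i) = xiq q ^ (∑ i, α i * β i : ZMod q).val := by
      rw [← chi_map_sum, ← chi_apply]
      congr 1
      refine Finset.sum_subset (Finset.subset_univ I) fun i _ hi => ?_
      rw [hα i hi, zero_mul]
    have hfilter : Finset.univ.filter (fun i => α i ≠ 0) = I.filter (fun i => α i ≠ 0) := by
      ext i
      simp only [Finset.mem_filter, Finset.mem_univ, true_and]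
      constructor
      · intro h; exact ⟨by by_contra hi; exact h (hα i hi), h⟩
      · exact fun h => h.2
    have hnorm : hammingNorm α = (I.filter (fun i => α i ≠ 0)).card := by
      rw [hammingNorm, ← hfilter]
    have hcards := Finset.card_filter_add_card_filter_not
      (s := I) (p := fun i => α i = 0)
    have hx : ∏ i ∈ I, (if α i = 0 then x else y)
        = x ^ (I.card - hammingNorm α) * y ^ hammingNorm α := by
      rw [Finset.prod_ite, Finset.prod_const, Finset.prod_const, hnorm]
      congr 2
      have : (I.filter (fun i => ¬ α i = 0)).card = (I.filter (fun i => α i ≠ 0)).card := rfl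
      omega
    rw [hchi, hx]
    ring
  rw [Finset.sum_congr rfl step1]
  have step2 : ∑ α ∈ Finset.univ.filter (fun α : Fin n → ZMod q => ∀ i ∉ I, α i = 0),
      ∏ i, H i (α i) = ∑ α : Fin n → ZMod q, ∏ i, H i (α i) := by
    refine Finset.sum_subset (Finset.filter_subset _ _) fun α _ hα => ?_
    simp only [Finset.mem_filter, Finset.mem_univ, true_and] at hα
    push_neg at hα
    obtain ⟨i, hiI, hi0⟩ := hα
    exact Finset.prod_eq_zero (Finset.mem_univ i) (by simp [hH, hiI, hi0])
  rw [step2]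
  have step3 : ∑ α : Fin n → ZMod q, ∏ i, H i (α i) = ∏ i, ∑ a : ZMod q, H i a := by
    rw [Finset.prod_univ_sum (fun _ => (Finset.univ : Finset (ZMod q))) H,
      Fintype.piFinset_univ]
  rw [step3]
  have step4 : ∀ i, ∑ a : ZMod q, H i a = if i ∈ I then F (β i) else 1 := by
    intro i
    by_cases hi : i ∈ I
    · simp only [hH, if_pos hi]
      exact hite (β i)
    · simp only [hH, if_neg hi]
      rw [Finset.sum_ite_eq' Finset.univ (0 : ZMod q) (fun _ => (1:ℂ))]
      simp
  rw [Finset.prod_congr rfl (fun i _ => step4 i)]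
  have step5 : ∏ i, (if i ∈ I then F (β i) else 1) = ∏ i ∈ I, F (β i) :=
    (Finset.prod_subset (Finset.subset_univ I)
      (fun i _ hi => if_neg hi)).symm.trans
      (Finset.prod_congr rfl fun i hi => if_pos hi)
  rw [step5]
  have hsupp : I.filter (fun i => ¬ β i = 0) = I ∩ supp q n β := by
    ext i; simp [supp, and_comm]
  have hcards := Finset.card_filter_add_card_filter_not
    (s := I) (p := fun i => β i = 0)
  rw [hF]
  rw [Finset.prod_ite, Finset.prod_const, Finset.prod_const, hsupp]
  rw [mul_comm]
  congr 2
  rw [← hsupp]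
  omega
end

section
/- Let f : F_q^n → ℂ, I ⊆ {1,...,n}, and let g^I_f(x,y) = ∑_{β ∈ Γ_I} f(β) y^{wt(β)} x^{|I| - wt(β)} be the local weight enumerator of f in the face Γ_I with respect to the zero vertex. Then g^I_f(x,y) = q^{-n} ∑_{β ∈ F_q^n} f̂(β) (x + (q-1)y)^{|I| - |I ∩ s(β)|} (x - y)^{|I ∩ s(β)|}, where f̂ is the Fourier transform of f. -/
/-! Both sides factor over the coordinates. The weight
`(x + (q-1)y)^(|I| - |I ∩ s(β)|) (x - y)^|I ∩ s(β)|` is `∏ i, u i (β i)` with `u i = 1` off `I`,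
so `∑ β, conj φ^γ(β) ∏ i, u i (β i) = ∏ i, ∑ b, conj ξ^(b γᵢ) u i b`. By orthogonality of the
characters of `ℤ/q` each factor is `q x` or `q y` for `i ∈ I` (as `γᵢ = 0` or not) and `q [γᵢ = 0]`
for `i ∉ I`, so the sum is `q^n` times the weighted indicator of `Γ_I` appearing in `g^I_f`;
expanding `f̂` and exchanging the two sums gives the identity. -/

open Finset Matrix

open ComplexConjugate

section Characters

variable {q : ℕ} [NeZero q]

lemma xiq_pow_val (a : ZMod q) : xiq q ^ a.val = ZMod.stdAddChar a := by
  rw [ZMod.stdAddChar_apply, ZMod.toCircle_apply, xiq, ← Complex.exp_nat_mul]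
  ring_nf

lemma AddChar.map_finsetSum {ι A M : Type*} [AddCommMonoid A] [CommMonoid M] (ψ : AddChar A M)
    (s : Finset ι) (g : ι → A) : ψ (∑ i ∈ s, g i) = ∏ i ∈ s, ψ (g i) :=
  map_sum ψ.toAddMonoidHom g s

lemma chr_eq_prod {n : ℕ} (β α : Fin n → ZMod q) :
    chr q n β α = ∏ i, ZMod.stdAddChar (α i * β i) := by
  rw [chr, xiq_pow_val, AddChar.map_finsetSum]

lemma sum_conj_stdAddChar_mul (c : ZMod q) :
    ∑ b : ZMod q, conj (ZMod.stdAddChar (b * c)) = if c = 0 then (q : ℂ) else 0 := by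
  rw [← map_sum, AddChar.sum_mulShift c (ZMod.isPrimitive_stdAddChar q), ZMod.card]
  split_ifs <;> simp

lemma sum_conj_stdAddChar_mul_ite_eq_zero (c : ZMod q) (x y : ℂ) :
    ∑ b : ZMod q, conj (ZMod.stdAddChar (b * c)) * (if b = 0 then x + (q - 1) * y else x - y)
      = q * if c = 0 then x else y := by
  have split : ∀ b : ZMod q, conj (ZMod.stdAddChar (b * c)) *
      (if b = 0 then x + (q - 1) * y else x - y)
      = conj (ZMod.stdAddChar (b * c)) * (x - y) + if b = 0 then (q : ℂ) * y else 0 := by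
    intro b
    split_ifs with hb
    · simp only [hb, zero_mul, AddChar.map_zero_eq_one, map_one]
      ring
    · ring
  simp only [split, Finset.sum_add_distrib, ← Finset.sum_mul, sum_conj_stdAddChar_mul,
    Finset.sum_ite_eq', Finset.mem_univ, if_true]
  split_ifs <;> ring

end Characters

section Weights

variable {q n : ℕ} [NeZero q]

lemma prod_ite_eq_zero_eq_pow_mul_pow (s : Finset (Fin n)) (β : Fin n → ZMod q) (a b : ℂ) :
    ∏ i ∈ s, (if β i = 0 then a else b)
      = a ^ (s.card - (s ∩ supp q n β).card) * b ^ (s ∩ supp q n β).card := by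
  have hsupp : s.filter (fun i => ¬ β i = 0) = s ∩ supp q n β := by
    ext i; simp [supp]
  have hcard := Finset.card_filter_add_card_filter_not (s := s) (p := fun i => β i = 0)
  rw [Finset.prod_ite, Finset.prod_const, Finset.prod_const, ← hsupp]
  congr 2
  omega

lemma sum_conj_chr_mul_prod (γ : Fin n → ZMod q) (u : Fin n → ZMod q → ℂ) :
    ∑ β : Fin n → ZMod q, conj (chr q n γ β) * ∏ i, u i (β i)
      = ∏ i, ∑ b : ZMod q, conj (ZMod.stdAddChar (b * γ i)) * u i b := by
  rw [Finset.prod_univ_sum]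
  simp only [chr_eq_prod, map_prod, Finset.prod_mul_distrib]
  rfl

lemma face_indicator_eq_prod (I : Finset (Fin n)) (γ : Fin n → ZMod q) (x y : ℂ) :
    (if γ ∈ face q n I 0 then x ^ (I.card - hammingDist γ 0) * y ^ hammingDist γ 0 else 0)
      = ∏ i, if i ∈ I then (if γ i = 0 then x else y) else (if γ i = 0 then 1 else 0) := by
  by_cases hγ : γ ∈ face q n I 0
  · have hout : ∀ i ∉ I, γ i = 0 := by simpa [face] using hγ
    have hdist : hammingDist γ 0 = (I ∩ supp q n γ).card := by
      rw [hammingDist_zero_right, hammingNorm]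
      congr 1
      ext i
      simp only [supp, Finset.mem_filter, Finset.mem_univ, true_and, Finset.mem_inter]
      exact ⟨fun h => ⟨not_not.mp (mt (hout i) h), h⟩, And.right⟩
    rw [if_pos hγ, hdist, ← prod_ite_eq_zero_eq_pow_mul_pow, ← Finset.prod_ite_mem_eq]
    refine Finset.prod_congr rfl fun i _ => ?_
    by_cases hi : i ∈ I
    · simp only [hi, if_true]
    · simp only [hi, if_false, hout i hi, if_true]
  · obtain ⟨i, hi, hγi⟩ : ∃ i ∉ I, γ i ≠ 0 := by simpa [face] using hγ
    rw [if_neg hγ, eq_comm]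
    exact Finset.prod_eq_zero (Finset.mem_univ i) (by simp [hi, hγi])

lemma sum_conj_chr_mul_weight (I : Finset (Fin n)) (x y : ℂ)
    (γ : Fin n → ZMod q) :
    ∑ β : Fin n → ZMod q, conj (chr q n γ β) *
        ((x + ((q : ℂ) - 1) * y) ^ (I.card - (I ∩ supp q n β).card) *
          (x - y) ^ (I ∩ supp q n β).card)
      = (q : ℂ) ^ n * if γ ∈ face q n I 0 then
          x ^ (I.card - hammingDist γ 0) * y ^ hammingDist γ 0 else 0 := by
  set u : Fin n → ZMod q → ℂ := fun i b =>
    if i ∈ I then (if b = 0 then x + ((q : ℂ) - 1) * y else x - y) else 1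
  have hweight : ∀ β : Fin n → ZMod q,
      (x + ((q : ℂ) - 1) * y) ^ (I.card - (I ∩ supp q n β).card) *
        (x - y) ^ (I ∩ supp q n β).card = ∏ i, u i (β i) := by
    intro β
    rw [← prod_ite_eq_zero_eq_pow_mul_pow, Finset.prod_ite_mem_eq]
  have hcoord : ∀ i c, ∑ b : ZMod q, conj (ZMod.stdAddChar (b * c)) * u i b
      = q * if i ∈ I then (if c = 0 then x else y) else (if c = 0 then 1 else 0) := by
    intro i c
    by_cases hi : i ∈ I
    · simp only [u, hi, if_true, sum_conj_stdAddChar_mul_ite_eq_zero]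
    · simp only [u, hi, if_false, mul_one, sum_conj_stdAddChar_mul, mul_ite, mul_zero]
  simp only [hweight, sum_conj_chr_mul_prod, hcoord, Finset.prod_mul_distrib, Finset.prod_const,
    Finset.card_univ, Fintype.card_fin, face_indicator_eq_prod]

end Weights

theorem stmt_4_general (q n : ℕ) [NeZero q]
    (f : (Fin n → ZMod q) → ℂ) (I : Finset (Fin n)) (x y : ℂ) :
    lwe q n f I 0 x y
      = ((q : ℂ) ^ n)⁻¹ * ∑ β : Fin n → ZMod q, ftr q n f β *
          (x + ((q : ℂ) - 1) * y) ^ (I.card - (I ∩ supp q n β).card) *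
          (x - y) ^ (I ∩ supp q n β).card := by
  have hqn : (q : ℂ) ^ n ≠ 0 := pow_ne_zero _ (Nat.cast_ne_zero.mpr (NeZero.ne q))
  calc lwe q n f I 0 x y
      = ∑ γ : Fin n → ZMod q, f γ * if γ ∈ face q n I 0 then
          x ^ (I.card - hammingDist γ 0) * y ^ hammingDist γ 0 else 0 := by
        simp only [lwe, mul_ite, mul_zero, Finset.sum_ite_mem, Finset.univ_inter]
        exact Finset.sum_congr rfl fun γ _ => by ring
    _ = ((q : ℂ) ^ n)⁻¹ * ((q : ℂ) ^ n * ∑ γ : Fin n → ZMod q, f γ *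
          if γ ∈ face q n I 0 then x ^ (I.card - hammingDist γ 0) * y ^ hammingDist γ 0 else 0) :=
        (inv_mul_cancel_left₀ hqn _).symm
    _ = ((q : ℂ) ^ n)⁻¹ * ∑ γ : Fin n → ZMod q, f γ * ∑ β : Fin n → ZMod q,
          conj (chr q n γ β) * ((x + ((q : ℂ) - 1) * y) ^ (I.card - (I ∩ supp q n β).card) *
            (x - y) ^ (I ∩ supp q n β).card) := by
        rw [Finset.mul_sum]
        exact congrArg _ (Finset.sum_congr rfl fun γ _ => by
          rw [sum_conj_chr_mul_weight, mul_left_comm])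
    _ = _ := by
        simp only [ftr, Finset.mul_sum, Finset.sum_mul, mul_assoc]
        rw [Finset.sum_comm]

theorem stmt_4 (q n : ℕ) [NeZero q] (hq : 2 ≤ q)
    (f : (Fin n → ZMod q) → ℂ) (I : Finset (Fin n)) (x y : ℂ) :
    lwe q n f I 0 x y
      = ((q : ℂ) ^ n)⁻¹ * ∑ β : Fin n → ZMod q, ftr q n f β *
          (x + ((q : ℂ) - 1) * y) ^ (I.card - (I ∩ supp q n β).card) *
          (x - y) ^ (I ∩ supp q n β).card :=
  stmt_4_general q n f I x y
end

section
/- Local distribution determination: if f is a λ_h-eigenfunction of H(n,q) and |I| ≥ n - h is such that additionally h ≤ |I|, then the (Ī,α)-local weight enumerator g^{Ī,α}_f is a polynomial identity determined by g^{I,α}_f via g^{Ī,α}_f(x,y) = (x+(q-1)y)^{|Ī|-h} (x'+(q-1)y')^{h-|I|} g^{I,α}_f(x',y') — in particular, when h ≤ min(|I|, |Ī|) the local distribution of f in a face is uniquely determined by its local distribution in the orthogonal face. -/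
open Finset Matrix

/-! Expand `f` in the characters `χ_γ(β) = ξ^{⟨β,γ⟩}`. Each `χ_γ` is an eigenfunction of
`H(n,q)` with eigenvalue `λ_{wt γ}`, so a `λ_h`-eigenfunction only involves characters of weight
`h`. The sum defining the local weight enumerator of `χ_γ` on a face runs over a product set and
factors coordinatewise, giving `χ_γ(α) (x+(q-1)y)^{|I|-w} (x-y)^w` with `w = |supp γ ∩ I|`. The
substitution `(x,y) ↦ (x',y')` swaps `x+(q-1)y` and `x-y`, and since `w_I + w_Ī = h` the
identity then holds character by character. -/

section Hamming

variable {ι R : Type*} [Fintype ι] [DecidableEq ι] [AddGroup R] [DecidableEq R]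

lemma hammingNorm_eq_one_iff {δ : ι → R} :
    hammingNorm δ = 1 ↔ ∃ i, ∃ c ≠ 0, Pi.single i c = δ := by
  constructor
  · intro hδ
    obtain ⟨i, hi⟩ := card_eq_one.mp hδ
    have hsupp : ∀ j, δ j ≠ 0 ↔ j = i := fun j => by
      simpa using congrArg (j ∈ ·) hi
    refine ⟨i, δ i, (hsupp i).mpr rfl, funext fun j => ?_⟩
    by_cases hj : j = i
    · subst hj; simp
    · rw [Pi.single_eq_of_ne hj]
      exact (not_not.mp (mt (hsupp j).mp hj)).symm
  · rintro ⟨i, c, hc, rfl⟩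
    rw [hammingNorm, card_eq_one]
    refine ⟨i, ext fun j => ?_⟩
    by_cases hj : j = i
    · subst hj; simp [hc]
    · simp [hj]

lemma sum_filter_hammingDist_eq_one [Fintype R] {M : Type*} [AddCommMonoid M] (β : ι → R)
    (g : (ι → R) → M) :
    ∑ α with hammingDist β α = 1, g α = ∑ i, ∑ c ∈ univ.erase 0, g (β + Pi.single i c) := by
  have hinj : Set.InjOn (fun p : ι × R => β + Pi.single p.1 p.2)
      (univ ×ˢ univ.erase (0 : R) : Finset (ι × R)) := by
    rintro ⟨i, c⟩ hic ⟨j, d⟩ hjd he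
    simp only [coe_product, coe_erase, coe_univ, Set.mem_prod, Set.mem_univ, Set.mem_sdiff,
      Set.mem_singleton_iff, true_and] at hic hjd he
    have he := add_left_cancel he
    obtain rfl : i = j := by
      by_contra hij
      simpa [Pi.single_eq_of_ne hij, hic] using congrFun he i
    simp only [Prod.mk.injEq, true_and]
    exact Pi.single_injective i he
  have himage : (univ ×ˢ univ.erase 0).image (fun p : ι × R => β + Pi.single p.1 p.2)
      = ({α | hammingDist β α = 1} : Finset (ι → R)) := by
    ext α
    rw [mem_filter, hammingDist_eq_hammingNorm, hammingNorm_eq_one_iff]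
    simp [eq_neg_add_iff_add_eq, and_comm]
  rw [← sum_product', ← himage, sum_image hinj]

end Hamming

namespace AddChar

variable {A M : Type*} [AddCommMonoid A] [CommMonoid M]

lemma map_sum_eq_prod (ψ : AddChar A M) {ι : Type*} (s : Finset ι) (g : ι → A) :
    ψ (∑ i ∈ s, g i) = ∏ i ∈ s, ψ (g i) := by
  induction s using Finset.cons_induction with
  | empty => simp
  | cons a s ha ih => rw [sum_cons, prod_cons, map_add_eq_mul, ih]

variable {ι R R' : Type*} [Fintype ι] [DecidableEq ι] [CommRing R] [Fintype R] [DecidableEq R]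
  [CommRing R'] [IsDomain R'] {ψ : AddChar R R'}

lemma sum_dotProduct_eq_ite (hψ : ψ.IsPrimitive) (δ : ι → R) :
    ∑ γ : ι → R, ψ (γ ⬝ᵥ δ) = if δ = 0 then (Fintype.card R : R') ^ Fintype.card ι else 0 := by
  have hprod : ∀ γ : ι → R, ψ (γ ⬝ᵥ δ) = ∏ i, ψ (γ i * δ i) := fun γ => map_sum_eq_prod ψ _ _
  simp_rw [hprod]
  rw [← Fintype.prod_sum fun i c => ψ (c * δ i)]
  simp_rw [sum_mulShift _ hψ, Nat.cast_ite, Nat.cast_zero]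
  rw [prod_ite_zero, prod_const, card_univ]
  simp [funext_iff]

lemma sum_mul_ite_eq (hψ : ψ.IsPrimitive) (g a : R) (x y : R') :
    ∑ b, ψ (g * b) * (if b = a then x else y)
      = ψ (g * a) * (if g = 0 then x + ((Fintype.card R : R') - 1) * y else x - y) := by
  have hsplit : ∀ b, ψ (g * b) * (if b = a then x else y)
      = ψ (b * g) * y + if b = a then ψ (g * a) * (x - y) else 0 := by
    intro b
    split_ifs with hb
    · subst hb; rw [mul_comm b]; ring
    · rw [mul_comm b, add_zero]
  rw [sum_congr rfl fun b _ => hsplit b, sum_add_distrib, ← sum_mul, sum_mulShift _ hψ,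
    sum_ite_eq' univ a, if_pos (mem_univ a)]
  split_ifs with hg
  · subst hg; simp only [zero_mul, map_zero_eq_one]; ring
  · ring

lemma sum_hammingDist_eq_one_dotProduct (hψ : ψ.IsPrimitive) (β γ : ι → R) :
    ∑ α with hammingDist β α = 1, ψ (γ ⬝ᵥ α)
      = (((Fintype.card R : R') - 1) * Fintype.card ι - Fintype.card R * hammingNorm γ)
        * ψ (γ ⬝ᵥ β) := by
  have hfiber : ∀ i, ∑ c ∈ univ.erase 0, ψ (γ i * c)
      = (if γ i = 0 then (Fintype.card R : R') else 0) - 1 := fun i => by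
    rw [sum_erase_eq_sub (mem_univ 0), mul_zero, map_zero_eq_one]
    simp_rw [mul_comm (γ i), sum_mulShift _ hψ, Nat.cast_ite, Nat.cast_zero]
  have hcard : #{i | γ i = 0} + hammingNorm γ = Fintype.card ι :=
    card_filter_add_card_filter_not _
  simp_rw [sum_filter_hammingDist_eq_one, dotProduct_add, dotProduct_single, map_add_eq_mul,
    ← mul_sum, hfiber]
  rw [sum_sub_distrib, sum_ite, sum_const_zero, add_zero, sum_const, sum_const, card_univ,
    nsmul_eq_mul, nsmul_eq_mul, mul_one, ← hcard]
  push_cast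
  ring

end AddChar

section HammingScheme

variable {q n : ℕ} [NeZero q]

lemma chr_eq_stdAddChar (β α : Fin n → ZMod q) : chr q n β α = ZMod.stdAddChar (α ⬝ᵥ β) := by
  rw [chr, xiq, dotProduct, ZMod.stdAddChar_apply, ZMod.toCircle_apply, ← Complex.exp_nat_mul]
  congr 1
  ring

lemma mul_eq_sum_ftr_mul_chr (f : (Fin n → ZMod q) → ℂ) (β : Fin n → ZMod q) :
    (q : ℂ) ^ n * f β = ∑ γ, ftr q n f γ * chr q n β γ := by
  have hprod : ∀ δ γ : Fin n → ZMod q,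
      (starRingEnd ℂ) (chr q n δ γ) * chr q n β γ = ZMod.stdAddChar (γ ⬝ᵥ (β - δ)) := by
    intro δ γ
    rw [chr_eq_stdAddChar, chr_eq_stdAddChar, ← AddChar.map_neg_eq_conj, ← AddChar.map_add_eq_mul,
      dotProduct_sub, neg_add_eq_sub]
  symm
  calc ∑ γ, ftr q n f γ * chr q n β γ
      = ∑ δ, f δ * ∑ γ : Fin n → ZMod q, ZMod.stdAddChar (γ ⬝ᵥ (β - δ)) := by
        simp_rw [ftr, sum_mul, mul_assoc, hprod, mul_sum]
        exact sum_comm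
    _ = ∑ δ, f δ * if δ = β then (q : ℂ) ^ n else 0 := by
        simp_rw [AddChar.sum_dotProduct_eq_ite (ZMod.isPrimitive_stdAddChar q), sub_eq_zero,
          eq_comm (a := β), ZMod.card, Fintype.card_fin]
    _ = (q : ℂ) ^ n * f β := by simp [mul_comm]

lemma ftr_sum_hammingDist_eq_one (f : (Fin n → ZMod q) → ℂ) (γ : Fin n → ZMod q) :
    ftr q n (fun α => ∑ β with hammingDist α β = 1, f β) γ
      = (((q : ℂ) - 1) * n - q * (supp q n γ).card) * ftr q n f γ := by
  have hsphere : ∀ β : Fin n → ZMod q, ∑ α with hammingDist β α = 1, (starRingEnd ℂ) (chr q n α γ)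
      = (((q : ℂ) - 1) * n - q * (supp q n γ).card) * (starRingEnd ℂ) (chr q n β γ) := by
    intro β
    simp_rw [chr_eq_stdAddChar]
    rw [← map_sum, AddChar.sum_hammingDist_eq_one_dotProduct (ZMod.isPrimitive_stdAddChar q),
      map_mul, ZMod.card, Fintype.card_fin]
    simp only [map_sub, map_mul, map_natCast, map_one]
    rfl
  calc ftr q n (fun α => ∑ β with hammingDist α β = 1, f β) γ
      = ∑ β, f β * ∑ α with hammingDist β α = 1, (starRingEnd ℂ) (chr q n α γ) := by
        simp_rw [ftr, sum_filter, sum_mul, mul_sum, ite_mul, mul_ite, zero_mul, mul_zero]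
        rw [sum_comm]
        simp_rw [hammingDist_comm]
    _ = _ := by
        simp_rw [hsphere, ftr, mul_sum]
        exact sum_congr rfl fun _ _ => by ring

lemma ftr_eq_zero_of_isEigenfun {h : ℕ} {f : (Fin n → ZMod q) → ℂ}
    (hf : IsEigenfun q n f (((q : ℂ) - 1) * n - q * h)) {γ : Fin n → ZMod q}
    (hγ : (supp q n γ).card ≠ h) : ftr q n f γ = 0 := by
  have hsmul : ftr q n (fun α => (((q : ℂ) - 1) * n - q * h) * f α) γ
      = (((q : ℂ) - 1) * n - q * h) * ftr q n f γ := by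
    simp_rw [ftr, mul_sum, mul_assoc]
  have heig := ftr_sum_hammingDist_eq_one f γ
  rw [funext hf, hsmul] at heig
  have hne : (q : ℂ) * ((supp q n γ).card - h) ≠ 0 :=
    mul_ne_zero (Nat.cast_ne_zero.mpr (NeZero.ne q)) (sub_ne_zero.mpr (mod_cast hγ))
  exact (mul_eq_zero.mp (by linear_combination heig : (q : ℂ) * ((supp q n γ).card - h)
    * ftr q n f γ = 0)).resolve_left hne

lemma face_eq_piFinset (I : Finset (Fin n)) (α : Fin n → ZMod q) :
    face q n I α = Fintype.piFinset fun i => if i ∈ I then univ else {α i} := by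
  ext β
  simp only [face, mem_filter, mem_univ, true_and, Fintype.mem_piFinset]
  refine forall_congr' fun i => ?_
  by_cases hi : i ∈ I <;> simp [hi]

lemma pow_hammingDist_mul_pow_eq_prod {I : Finset (Fin n)} {α β : Fin n → ZMod q}
    (hβ : β ∈ face q n I α) (x y : ℂ) :
    y ^ hammingDist β α * x ^ (I.card - hammingDist β α)
      = ∏ i ∈ I, if β i = α i then x else y := by
  simp only [face, mem_filter, mem_univ, true_and] at hβ
  have hdist : hammingDist β α = #{i ∈ I | β i ≠ α i} := by
    refine congrArg card (ext fun i => ?_)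
    simp only [mem_filter, mem_univ, true_and]
    exact ⟨fun hne => ⟨by_contra fun hi => hne (hβ i hi), hne⟩, And.right⟩
  have hcard : #{i ∈ I | β i = α i} + #{i ∈ I | β i ≠ α i} = #I :=
    card_filter_add_card_filter_not _
  rw [prod_ite, prod_const, prod_const, hdist, ← hcard, Nat.add_sub_cancel, mul_comm]

lemma lwe_chr (γ : Fin n → ZMod q) (I : Finset (Fin n)) (α : Fin n → ZMod q) (x y : ℂ) :
    lwe q n (chr q n · γ) I α x y
      = chr q n α γ * (x + ((q : ℂ) - 1) * y) ^ #{i ∈ I | γ i = 0}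
        * (x - y) ^ #{i ∈ I | γ i ≠ 0} := by
  set F : Fin n → ZMod q → ℂ := fun i b =>
    ZMod.stdAddChar (γ i * b) * if i ∈ I then (if b = α i then x else y) else 1
  have hterm : ∀ β ∈ face q n I α,
      chr q n β γ * y ^ hammingDist β α * x ^ (I.card - hammingDist β α) = ∏ i, F i (β i) := by
    intro β hβ
    rw [mul_assoc, pow_hammingDist_mul_pow_eq_prod hβ, chr_eq_stdAddChar, dotProduct,
      AddChar.map_sum_eq_prod, ← univ_inter I, ← prod_ite_mem, ← prod_mul_distrib]
  have hfactor : ∀ i, ∑ b ∈ if i ∈ I then univ else {α i}, F i b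
      = ZMod.stdAddChar (γ i * α i)
        * if i ∈ I then (if γ i = 0 then x + ((q : ℂ) - 1) * y else x - y) else 1 := by
    intro i
    by_cases hi : i ∈ I
    · simp only [F, hi, if_true]
      rw [AddChar.sum_mul_ite_eq (ZMod.isPrimitive_stdAddChar q), ZMod.card]
    · simp [F, hi]
  rw [lwe, sum_congr rfl hterm, face_eq_piFinset, ← prod_univ_sum,
    prod_congr rfl fun i _ => hfactor i, prod_mul_distrib, prod_ite_mem, univ_inter, prod_ite, prod_const, prod_const,
    ← AddChar.map_sum_eq_prod, chr_eq_stdAddChar, dotProduct]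
  ring

lemma lwe_chr_compl_eq {h : ℕ} {γ : Fin n → ZMod q} (hγ : (supp q n γ).card = h)
    {I : Finset (Fin n)} (hI : h ≤ I.card) (hIc : h ≤ Iᶜ.card) (α : Fin n → ZMod q) (x y : ℂ) :
    ((x + ((q : ℂ) - 2) * y) + ((q : ℂ) - 1) * (-y)) ^ (I.card - h) *
      lwe q n (chr q n · γ) Iᶜ α x y
    = (x + ((q : ℂ) - 1) * y) ^ (Iᶜ.card - h) *
        lwe q n (chr q n · γ) I α (x + ((q : ℂ) - 2) * y) (-y) := by
  have hsplit : #{i ∈ I | γ i ≠ 0} + #{i ∈ Iᶜ | γ i ≠ 0} = h := by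
    rw [← hγ, supp, card_filter, card_filter, card_filter, sum_add_sum_compl]
  have hzI : #{i ∈ I | γ i = 0} + #{i ∈ I | γ i ≠ 0} = #I := card_filter_add_card_filter_not _
  have hzIc : #{i ∈ Iᶜ | γ i = 0} + #{i ∈ Iᶜ | γ i ≠ 0} = #Iᶜ :=
    card_filter_add_card_filter_not _
  have hexpI : #{i ∈ I | γ i = 0} = (I.card - h) + #{i ∈ Iᶜ | γ i ≠ 0} := by omega
  have hexpIc : #{i ∈ Iᶜ | γ i = 0} = (Iᶜ.card - h) + #{i ∈ I | γ i ≠ 0} := by omega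
  rw [lwe_chr, lwe_chr, hexpI, hexpIc]
  ring

lemma mul_lwe_eq_sum_ftr_mul_lwe_chr (f : (Fin n → ZMod q) → ℂ) (I : Finset (Fin n))
    (α : Fin n → ZMod q) (x y : ℂ) :
    (q : ℂ) ^ n * lwe q n f I α x y = ∑ γ, ftr q n f γ * lwe q n (chr q n · γ) I α x y := by
  simp_rw [lwe, mul_sum, ← mul_assoc, mul_eq_sum_ftr_mul_chr, sum_mul]
  exact sum_comm

end HammingScheme

theorem stmt_17_general (q n : ℕ) [NeZero q] (h : ℕ)
    (f : (Fin n → ZMod q) → ℂ)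
    (hf : IsEigenfun q n f (((q : ℂ) - 1) * n - (q : ℂ) * h))
    (α : Fin n → ZMod q) (I : Finset (Fin n))
    (hI : h ≤ I.card) (hIc : h ≤ Iᶜ.card) (x y : ℂ) :
    ((x + ((q : ℂ) - 2) * y) + ((q : ℂ) - 1) * (-y)) ^ (I.card - h) *
      lwe q n f Iᶜ α x y
    = (x + ((q : ℂ) - 1) * y) ^ (Iᶜ.card - h) *
        lwe q n f I α (x + ((q : ℂ) - 2) * y) (-y) := by
  refine mul_left_cancel₀ (pow_ne_zero n (Nat.cast_ne_zero.mpr (NeZero.ne q)) : (q : ℂ) ^ n ≠ 0) ?_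
  rw [mul_left_comm, mul_lwe_eq_sum_ftr_mul_lwe_chr, mul_left_comm, mul_lwe_eq_sum_ftr_mul_lwe_chr,
    mul_sum, mul_sum]
  refine sum_congr rfl fun γ _ => ?_
  by_cases hγ : (supp q n γ).card = h
  · rw [mul_left_comm, lwe_chr_compl_eq hγ hI hIc, mul_left_comm]
  · simp [ftr_eq_zero_of_isEigenfun hf hγ]

/-- When `h ≤ min(|I|,|Ī|)`, the local distribution of a `λ_h`-eigenfunction in
a face is determined by its local distribution in the orthogonal face:
`(x'+(q-1)y')^{|I|-h} g^{Ī,α}_f(x,y) = (x+(q-1)y)^{|Ī|-h} g^{I,α}_f(x',y')`. -/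
theorem stmt_17 (q n : ℕ) [NeZero q] (hq : 2 ≤ q) (h : ℕ)
    (f : (Fin n → ZMod q) → ℂ)
    (hf : IsEigenfun q n f (((q : ℂ) - 1) * n - (q : ℂ) * h))
    (α : Fin n → ZMod q) (I : Finset (Fin n))
    (hI : h ≤ I.card) (hIc : h ≤ Iᶜ.card) (x y : ℂ) :
    ((x + ((q : ℂ) - 2) * y) + ((q : ℂ) - 1) * (-y)) ^ (I.card - h) *
      lwe q n f Iᶜ α x y
    = (x + ((q : ℂ) - 1) * y) ^ (Iᶜ.card - h) *
        lwe q n f I α (x + ((q : ℂ) - 2) * y) (-y) :=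
  stmt_17_general q n h f hf α I hI hIc x y
end

section
/- Let f be a λ_h-eigenfunction of H(n,q) and let Γ_Ī(α) be a face of dimension |Ī| with |I| < h, i.e. |Ī| > n - h. Then ∑_{j=0}^{|Ī|} v^{Ī,f}_j(α) = 0, that is, the sum of f over the face Γ_Ī(α) is zero. Equivalently, the sum of a λ_h-eigenfunction over any face of dimension greater than n - h is zero. -/
open Finset Matrix

section Helpers19
set_option linter.unusedSectionVars false

variable (q n : ℕ) [NeZero q]

lemma diff_spec (β γ : Fin n → ZMod q) (hγ : hammingDist β γ = 1) :
    ∃ i : Fin n, (univ.filter fun j => β j ≠ γ j) = {i} :=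
  Finset.card_eq_one.mp hγ

noncomputable def diffIdx (β γ : Fin n → ZMod q) (hγ : hammingDist β γ = 1) : Fin n :=
  (diff_spec q n β γ hγ).choose

lemma diffIdx_spec (β γ : Fin n → ZMod q) (hγ : hammingDist β γ = 1) :
    (univ.filter fun j => β j ≠ γ j) = {diffIdx q n β γ hγ} :=
  (diff_spec q n β γ hγ).choose_spec

lemma diffIdx_ne (β γ : Fin n → ZMod q) (hγ : hammingDist β γ = 1) :
    β (diffIdx q n β γ hγ) ≠ γ (diffIdx q n β γ hγ) := by
  have h2 : diffIdx q n β γ hγ ∈ (univ.filter fun j => β j ≠ γ j) := by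
    rw [diffIdx_spec q n β γ hγ]; exact mem_singleton_self _
  simpa using h2

lemma diffIdx_eq_of_ne (β γ : Fin n → ZMod q) (hγ : hammingDist β γ = 1)
    (j : Fin n) (hj : j ≠ diffIdx q n β γ hγ) : β j = γ j := by
  by_contra hne
  have : j ∈ (univ.filter fun j => β j ≠ γ j) := by simp [hne]
  rw [diffIdx_spec q n β γ hγ] at this
  exact hj (mem_singleton.mp this)

lemma update_diffIdx (β γ : Fin n → ZMod q) (hγ : hammingDist β γ = 1) :
    Function.update β (diffIdx q n β γ hγ) (γ (diffIdx q n β γ hγ)) = γ := by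
  funext j
  rcases eq_or_ne j (diffIdx q n β γ hγ) with hj | hj
  · rw [hj, Function.update_self]
  · rw [Function.update_of_ne hj]
    exact diffIdx_eq_of_ne q n β γ hγ j hj

lemma update_hd (β : Fin n → ZMod q) (i : Fin n) (c : ZMod q)
    (hc : c ≠ β i) : hammingDist β (Function.update β i c) = 1 := by
  show (univ.filter fun j => β j ≠ Function.update β i c j).card = 1
  have : (univ.filter fun j => β j ≠ Function.update β i c j) = {i} := by
    ext j
    simp only [mem_filter, mem_univ, true_and, mem_singleton]
    rcases eq_or_ne j i with rfl | hji
    · simp [Function.update_self, Ne.symm hc]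
    · simp [Function.update_of_ne hji, hji]
  rw [this, card_singleton]

lemma prod_sum (G : Fin n × ZMod q → ℂ) (β : Fin n → ZMod q) :
    ∑ p ∈ univ.filter (fun p : Fin n × ZMod q => p.2 ≠ β p.1), G p
    = ∑ i : Fin n, ∑ c ∈ univ.erase (β i), G (i, c) := by
  rw [Finset.sum_filter, Fintype.sum_prod_type]
  refine Finset.sum_congr rfl fun i _ => ?_
  rw [← Finset.sum_filter]
  congr 1
  ext c
  simp [Finset.mem_erase]

lemma nbr_sum (f : (Fin n → ZMod q) → ℂ) (β : Fin n → ZMod q) :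
    ∑ γ ∈ univ.filter (fun γ => hammingDist β γ = 1), f γ
    = ∑ i : Fin n, ∑ c ∈ univ.erase (β i), f (Function.update β i c) := by
  rw [← prod_sum q n (fun p => f (Function.update β p.1 p.2)) β]
  refine Finset.sum_bij'
    (i := fun γ hγ => ((diffIdx q n β γ (by simpa using hγ),
        γ (diffIdx q n β γ (by simpa using hγ))) : Fin n × ZMod q))
    (j := fun p _ => Function.update β p.1 p.2) ?_ ?_ ?_ ?_ ?_
  · intro γ hγ
    simp only [mem_filter, mem_univ, true_and]
    exact (diffIdx_ne q n β γ (by simpa using hγ)).symm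
  · intro p hp
    simp only [mem_filter, mem_univ, true_and] at hp ⊢
    exact update_hd q n β p.1 p.2 hp
  · intro γ hγ
    simp only
    exact update_diffIdx q n β γ (by simpa using hγ)
  · intro p hp
    simp only [mem_filter, mem_univ, true_and] at hp
    have hd : hammingDist β (Function.update β p.1 p.2) = 1 := update_hd q n β p.1 p.2 hp
    have hi : diffIdx q n β (Function.update β p.1 p.2) (by simpa using hd) = p.1 := by
      have hs := diffIdx_spec q n β (Function.update β p.1 p.2) (by simpa using hd)
      have h1 : p.1 ∈ (univ.filter fun j => β j ≠ Function.update β p.1 p.2 j) := by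
        simp [Function.update_self, Ne.symm hp]
      rw [hs] at h1
      exact (mem_singleton.mp h1).symm
    rw [Prod.ext_iff]
    refine ⟨hi, ?_⟩
    rw [hi, Function.update_self]
  · intro γ hγ
    simp only
    rw [update_diffIdx q n β γ (by simpa using hγ)]

lemma mem_face (J : Finset (Fin n)) (α β : Fin n → ZMod q) :
    β ∈ face q n J α ↔ ∀ i ∉ J, β i = α i := by
  simp [face]

lemma face_sum_in (f : (Fin n → ZMod q) → ℂ) (J : Finset (Fin n)) (α : Fin n → ZMod q)
    (i : Fin n) (hi : i ∈ J) :
    ∑ β ∈ face q n J α, ∑ c : ZMod q, f (Function.update β i c)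
    = (q : ℂ) * ∑ β ∈ face q n J α, f β := by
  have upd_mem : ∀ β ∈ face q n J α, ∀ c : ZMod q, Function.update β i c ∈ face q n J α := by
    intro β hβ c
    rw [mem_face] at hβ ⊢
    intro j hj
    rw [Function.update_of_ne (by rintro rfl; exact hj hi)]
    exact hβ j hj
  rw [← Finset.sum_product']
  have := Finset.sum_bij' (s := (face q n J α) ×ˢ (univ : Finset (ZMod q)))
    (t := (face q n J α) ×ˢ (univ : Finset (ZMod q)))
    (f := fun p => f (Function.update p.1 i p.2))
    (g := fun p => f p.1)
    (i := fun p _ => ((Function.update p.1 i p.2, p.1 i) : _ × ZMod q))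
    (j := fun p _ => ((Function.update p.1 i p.2, p.1 i) : _ × ZMod q))
    (fun p hp => by
      simp only [Finset.mem_product, mem_univ, and_true] at hp ⊢
      exact upd_mem p.1 hp p.2)
    (fun p hp => by
      simp only [Finset.mem_product, mem_univ, and_true] at hp ⊢
      exact upd_mem p.1 hp p.2)
    (fun p hp => by
      simp only
      rw [Prod.ext_iff]
      constructor
      · funext j
        rcases eq_or_ne j i with rfl | hj
        · simp
        · simp [Function.update_of_ne hj]
      · simp)
    (fun p hp => by
      simp only
      rw [Prod.ext_iff]
      constructor
      · funext j
        rcases eq_or_ne j i with rfl | hj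
        · simp
        · simp [Function.update_of_ne hj]
      · simp)
    (fun p hp => rfl)
  rw [this, Finset.sum_product]
  simp [ZMod.card, Finset.mul_sum, mul_comm]

lemma face_sum_out (f : (Fin n → ZMod q) → ℂ) (J : Finset (Fin n)) (α : Fin n → ZMod q)
    (i : Fin n) (hi : i ∉ J) :
    ∑ β ∈ face q n J α, ∑ c : ZMod q, f (Function.update β i c)
    = ∑ γ ∈ face q n (insert i J) α, f γ := by
  rw [← Finset.sum_product']
  refine Finset.sum_bij' (i := fun p _ => Function.update p.1 i p.2)
    (j := fun γ _ => ((Function.update γ i (α i), γ i) : _ × ZMod q)) ?_ ?_ ?_ ?_ ?_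
  · intro p hp
    simp only [Finset.mem_product, mem_univ, and_true] at hp
    rw [mem_face] at hp ⊢
    intro j hj
    have hji : j ≠ i := fun hji => hj (hji ▸ Finset.mem_insert_self i J)
    show Function.update p.1 i p.2 j = α j
    rw [Function.update_of_ne hji]
    exact hp j (fun hjJ => hj (Finset.mem_insert_of_mem hjJ))
  · intro γ hγ
    simp only [Finset.mem_product, mem_univ, and_true]
    rw [mem_face] at hγ ⊢
    intro j hj
    rcases eq_or_ne j i with rfl | hji
    · simp
    · rw [Function.update_of_ne hji]
      exact hγ j (by simp [hji, hj])
  · intro p hp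
    simp only [Finset.mem_product, mem_univ, and_true] at hp
    rw [mem_face] at hp
    rw [Prod.ext_iff]
    constructor
    · funext j
      rcases eq_or_ne j i with rfl | hj
      · simp only [Function.update_self]
        exact (hp _ hi).symm
      · simp [Function.update_of_ne hj]
    · simp
  · intro γ hγ
    simp only
    funext j
    rcases eq_or_ne j i with rfl | hj
    · simp
    · simp [Function.update_of_ne hj]
  · intro p hp
    rfl

lemma face_step (f : (Fin n → ZMod q) → ℂ) (μ : ℂ) (hf : IsEigenfun q n f μ)
    (J : Finset (Fin n)) (α : Fin n → ZMod q) :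
    μ * (∑ β ∈ face q n J α, f β)
    = (J.card : ℂ) * ((q : ℂ) - 1) * (∑ β ∈ face q n J α, f β)
      + ∑ i ∈ Jᶜ, ((∑ β ∈ face q n (insert i J) α, f β) - ∑ β ∈ face q n J α, f β) := by
  have h1 : μ * ∑ β ∈ face q n J α, f β
      = ∑ β ∈ face q n J α, ∑ i : Fin n, ∑ c ∈ univ.erase (β i), f (Function.update β i c) := by
    rw [Finset.mul_sum]
    refine Finset.sum_congr rfl fun β _ => ?_
    rw [← hf β, nbr_sum]
  rw [h1, Finset.sum_comm]
  have h2 : ∀ i : Fin n, ∑ β ∈ face q n J α, ∑ c ∈ univ.erase (β i), f (Function.update β i c)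
      = (∑ β ∈ face q n J α, ∑ c : ZMod q, f (Function.update β i c))
        - ∑ β ∈ face q n J α, f β := by
    intro i
    rw [← Finset.sum_sub_distrib]
    refine Finset.sum_congr rfl fun β _ => ?_
    rw [Finset.sum_erase_eq_sub (mem_univ _), Function.update_eq_self]
  calc ∑ i : Fin n, ∑ β ∈ face q n J α, ∑ c ∈ univ.erase (β i), f (Function.update β i c)
      = ∑ i ∈ J, (∑ β ∈ face q n J α, ∑ c ∈ univ.erase (β i), f (Function.update β i c))
        + ∑ i ∈ Jᶜ, (∑ β ∈ face q n J α, ∑ c ∈ univ.erase (β i), f (Function.update β i c)) :=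
        (Finset.sum_add_sum_compl J _).symm
    _ = _ := by
        congr 1
        · rw [show (J.card : ℂ) * ((q : ℂ) - 1) * (∑ β ∈ face q n J α, f β)
            = ∑ _i ∈ J, (((q : ℂ) - 1) * ∑ β ∈ face q n J α, f β) by
              rw [Finset.sum_const, nsmul_eq_mul, mul_assoc]]
          refine Finset.sum_congr rfl fun i hi => ?_
          rw [h2 i, face_sum_in q n f J α i hi]
          ring
        · refine Finset.sum_congr rfl fun i hi => ?_
          rw [h2 i, face_sum_out q n f J α i (Finset.mem_compl.mp hi)]

end Helpers19

/-- The sum of a `λ_h`-eigenfunction over any face of dimension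
greater than `n - h` is zero. -/
theorem stmt_19 (q n : ℕ) [NeZero q] (hq : 2 ≤ q) (h : ℕ) (hh : h ≤ n)
    (f : (Fin n → ZMod q) → ℂ)
    (hf : IsEigenfun q n f (((q : ℂ) - 1) * n - (q : ℂ) * h))
    (α : Fin n → ZMod q) (J : Finset (Fin n)) (hJ : n - h < J.card) :
    ∑ β ∈ face q n J α, f β = 0 := by
  set μ : ℂ := ((q : ℂ) - 1) * n - (q : ℂ) * h with hμ
  have key : ∀ m : ℕ, ∀ J : Finset (Fin n), ∀ α, n - J.card ≤ m → n - h < J.card →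
      ∑ β ∈ face q n J α, f β = 0 := by
    intro m
    induction m with
    | zero =>
      intro J α hm hJc
      have hcard : J.card ≤ n := le_trans (Finset.card_le_univ J) (by simp)
      have hJu : Jᶜ = ∅ := by
        rw [← Finset.card_eq_zero, Finset.card_compl]
        simp only [Fintype.card_fin]
        omega
      have hs := face_step q n f μ hf J α
      rw [hJu, Finset.sum_empty, add_zero] at hs
      have hc : μ - (J.card : ℂ) * ((q : ℂ) - 1) ≠ 0 := by
        have hJn : J.card = n := by omega
        rw [hμ, hJn]
        have : ((q : ℂ) - 1) * n - (q : ℂ) * h - (n : ℂ) * ((q : ℂ) - 1)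
            = -((q : ℂ) * h) := by ring
        rw [this, neg_ne_zero]
        have hq0 : (q : ℂ) ≠ 0 := Nat.cast_ne_zero.mpr (NeZero.ne q)
        have hh0 : (h : ℂ) ≠ 0 := Nat.cast_ne_zero.mpr (by omega)
        exact mul_ne_zero hq0 hh0
      have : (μ - (J.card : ℂ) * ((q : ℂ) - 1)) * (∑ β ∈ face q n J α, f β) = 0 := by
        rw [sub_mul, hs]; ring
      exact (mul_eq_zero.mp this).resolve_left hc
    | succ m ih =>
      intro J α hm hJc
      have hcard : J.card ≤ n := le_trans (Finset.card_le_univ J) (by simp)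
      have hs := face_step q n f μ hf J α
      have hins : ∀ i ∈ Jᶜ, ∑ β ∈ face q n (insert i J) α, f β = 0 := by
        intro i hi
        have hiJ : i ∉ J := Finset.mem_compl.mp hi
        have hciJ : i ∈ J → False := hiJ
        have hci : (insert i J).card = J.card + 1 := Finset.card_insert_of_notMem hiJ
        exact ih (insert i J) α (by omega) (by omega)
      have hsum : ∑ i ∈ Jᶜ, ((∑ β ∈ face q n (insert i J) α, f β) - ∑ β ∈ face q n J α, f β)
          = ((n - J.card : ℕ) : ℂ) * (-(∑ β ∈ face q n J α, f β)) := by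
        rw [show (∑ i ∈ Jᶜ, ((∑ β ∈ face q n (insert i J) α, f β) - ∑ β ∈ face q n J α, f β))
            = ∑ _i ∈ Jᶜ, (-(∑ β ∈ face q n J α, f β)) from
          Finset.sum_congr rfl (fun i hi => by rw [hins i hi, zero_sub])]
        rw [Finset.sum_const, nsmul_eq_mul, Finset.card_compl, Fintype.card_fin]
      rw [hsum] at hs
      -- hs : μ * S = J.card * (q-1) * S + (n - J.card) * (-S)
      have hc : μ - (J.card : ℂ) * ((q : ℂ) - 1) + ((n - J.card : ℕ) : ℂ) ≠ 0 := by
        have hd : (n - J.card : ℕ) < h := by omega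
        have hcast : (((n - J.card : ℕ) : ℂ)) = (n : ℂ) - (J.card : ℂ) := by
          push_cast [Nat.cast_sub hcard]; ring
        rw [hμ, hcast]
        have : ((q : ℂ) - 1) * n - (q : ℂ) * h - (J.card : ℂ) * ((q : ℂ) - 1)
            + ((n : ℂ) - (J.card : ℂ)) = (q : ℂ) * (((n - J.card : ℕ) : ℂ) - (h : ℂ)) := by
          rw [hcast]; ring
        rw [this]
        refine mul_ne_zero (Nat.cast_ne_zero.mpr (NeZero.ne q)) ?_
        rw [sub_ne_zero]
        exact fun hc => absurd (Nat.cast_injective hc) (by omega)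
      have : (μ - (J.card : ℂ) * ((q : ℂ) - 1) + ((n - J.card : ℕ) : ℂ))
          * (∑ β ∈ face q n J α, f β) = 0 := by
        rw [add_mul, sub_mul, hs]; ring
      exact (mul_eq_zero.mp this).resolve_left hc
  exact key (n - J.card) J α le_rfl hJ
end
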